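/- arXiv:2009.05100 — 7 statements merged into one kernel-verified Lean document; each statement's English description precedes it below -/
import Mathlib

section
/- If A is an n×n tridiagonal doubly stochastic matrix, then A is symmetric. -/
open Matrix

/-- An `n × n` real matrix is doubly stochastic if it is entrywise non-negative
and every row sum and column sum equals 1. -/
def IsDoublyStochastic {n : ℕ} (A : Matrix (Fin n) (Fin n) ℝ) : Prop :=
  (∀ i j, 0 ≤ A i j) ∧ (∀ i, ∑ j, A i j = 1) ∧ (∀ j, ∑ i, A i j = 1)

/-- A matrix is tridiagonal if `A i j = 0` whenever `|i - j| ≥ 2`. -/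
def IsTridiagonal {n : ℕ} (A : Matrix (Fin n) (Fin n) ℝ) : Prop :=
  ∀ i j : Fin n, 2 ≤ |(i : ℤ) - (j : ℤ)| → A i j = 0

/-- The superdiagonal entries `b_k = A (k, k+1)` in the 1-based indexing of the paper
(so `bEnt A k = A ⟨k-1⟩ ⟨k⟩` in 0-based indexing for `1 ≤ k ≤ n-1`), with the
convention `b_0 = b_n = 0`. -/
def bEnt {n : ℕ} (A : Matrix (Fin n) (Fin n) ℝ) (k : ℕ) : ℝ :=
  if h : 1 ≤ k ∧ k < n then A ⟨k - 1, by omega⟩ ⟨k, h.2⟩ else 0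

/-!
Row sums equal to column sums mean that the net flow out of any set of indices `s`,
`∑ i ∈ s, ∑ j ∉ s, (A i j - A j i)`, vanishes, since the flow inside `s` cancels.
For a tridiagonal matrix and `s = {0, …, k}` the only entries crossing the cut are
`A k (k+1)` and `A (k+1) k`, so these are equal.
-/

theorem Matrix.sum_sum_compl_eq_of_rowSum_eq_colSum {ι R : Type*} [Fintype ι] [DecidableEq ι]
    [AddCommGroup R] (A : Matrix ι ι R) (h : ∀ i, ∑ j, A i j = ∑ j, A j i) (s : Finset ι) :
    ∑ i ∈ s, ∑ j ∈ sᶜ, A i j = ∑ i ∈ s, ∑ j ∈ sᶜ, Aᵀ i j := by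
  have hs : ∑ i ∈ s, ∑ j, A i j = ∑ i ∈ s, ∑ j, A j i := Finset.sum_congr rfl fun i _ ↦ h i
  simp only [← Finset.sum_add_sum_compl s, Finset.sum_add_distrib] at hs
  rw [Finset.sum_comm (s := s) (t := s) (f := fun i j ↦ A j i)] at hs
  exact add_left_cancel hs

namespace IsTridiagonal

variable {n : ℕ} {A : Matrix (Fin n) (Fin n) ℝ}

theorem transpose (htri : IsTridiagonal A) : IsTridiagonal Aᵀ :=
  fun i j h ↦ htri j i (by rwa [abs_sub_comm])

theorem sum_Iic_sum_compl (htri : IsTridiagonal A) {k k' : Fin n} (hk : (k' : ℕ) = k + 1) :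
    ∑ i ∈ Finset.Iic k, ∑ j ∈ (Finset.Iic k)ᶜ, A i j = A k k' := by
  have hk' : k' ∈ (Finset.Iic k)ᶜ := by
    rw [Finset.mem_compl, Finset.mem_Iic, not_le, Fin.lt_def]; omega
  rw [Finset.sum_eq_single_of_mem k (Finset.mem_Iic.2 le_rfl),
    Finset.sum_eq_single_of_mem k' hk']
  · intro j hj hjk'
    simp only [Finset.mem_compl, Finset.mem_Iic, not_le, Fin.lt_def] at hj
    exact htri k j (by rw [le_abs]; right; omega)
  · intro i hi hik
    simp only [Finset.mem_Iic, Fin.le_def] at hi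
    refine Finset.sum_eq_zero fun j hj ↦ htri i j ?_
    simp only [Finset.mem_compl, Finset.mem_Iic, not_le, Fin.lt_def] at hj
    rw [le_abs]; right; omega

end IsTridiagonal

/-- Every tridiagonal doubly stochastic matrix is symmetric. -/
theorem tridiagonal_doublyStochastic_symmetric {n : ℕ} (A : Matrix (Fin n) (Fin n) ℝ)
    (hDS : IsDoublyStochastic A) (htri : IsTridiagonal A) :
    Aᵀ = A := by
  have hsums : ∀ i, ∑ j, A i j = ∑ j, A j i := fun i ↦ (hDS.2.1 i).trans (hDS.2.2 i).symm
  have hadj : ∀ k k' : Fin n, (k' : ℕ) = k + 1 → A k k' = A k' k := fun k k' hk ↦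
    (htri.sum_Iic_sum_compl hk).symm.trans <|
      (A.sum_sum_compl_eq_of_rowSum_eq_colSum hsums _).trans (htri.transpose.sum_Iic_sum_compl hk)
  ext i j
  rw [transpose_apply]
  by_cases hfar : 2 ≤ |(i : ℤ) - j|
  · rw [htri i j hfar, htri j i (by rwa [abs_sub_comm])]
  · rw [not_le, abs_lt] at hfar
    obtain h | h | h : (j : ℕ) = i + 1 ∨ (i : ℕ) = j + 1 ∨ i = j := by
      rw [Fin.ext_iff]; omega
    · exact (hadj i j h).symm
    · exact hadj j i h
    · rw [h]
end

section
/- For every n ≥ 2 and every real λ ∈ [-1, 1], there exists an n×n tridiagonal doubly stochastic matrix having λ as an eigenvalue. -/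
open Matrix

/-! Take `A = ((1 + μ) / 2) • 1 + ((1 - μ) / 2) • P`, where `P` is the permutation matrix of the
transposition of the first two indices. It is a convex combination of permutation matrices, hence
doubly stochastic, and tridiagonal because the transposed indices are adjacent. Since
`P (e₀ - e₁) = -(e₀ - e₁)`, the vector `e₀ - e₁` is an eigenvector of `A` for the eigenvalue
`(1 + μ) / 2 - (1 - μ) / 2 = μ`. -/

lemma isDoublyStochastic_iff_mem_doublyStochastic {n : ℕ} {A : Matrix (Fin n) (Fin n) ℝ} :
    IsDoublyStochastic A ↔ A ∈ doublyStochastic ℝ (Fin n) :=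
  mem_doublyStochastic_iff_sum.symm

namespace IsTridiagonal

variable {n : ℕ} {A B : Matrix (Fin n) (Fin n) ℝ}

lemma one : IsTridiagonal (1 : Matrix (Fin n) (Fin n) ℝ) := by
  intro i j hij
  refine one_apply_ne fun h => ?_
  simp [h] at hij

lemma add (hA : IsTridiagonal A) (hB : IsTridiagonal B) : IsTridiagonal (A + B) := by
  intro i j hij
  simp [hA i j hij, hB i j hij]

lemma smul (hA : IsTridiagonal A) (c : ℝ) : IsTridiagonal (c • A) := by
  intro i j hij
  simp [hA i j hij]

end IsTridiagonal

lemma isTridiagonal_permMatrix {n : ℕ} {σ : Equiv.Perm (Fin n)}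
    (hσ : ∀ k : Fin n, |(k : ℤ) - (σ k : ℤ)| ≤ 1) : IsTridiagonal (σ.permMatrix ℝ) := by
  intro k l hkl
  simp only [PEquiv.toMatrix_apply, Equiv.toPEquiv_apply, Option.mem_some_iff]
  rw [if_neg]
  rintro rfl
  linarith [hσ k]

lemma isTridiagonal_permMatrix_swap {n : ℕ} {i j : Fin n} (hij : |(i : ℤ) - (j : ℤ)| ≤ 1) :
    IsTridiagonal ((Equiv.swap i j).permMatrix ℝ) := by
  refine isTridiagonal_permMatrix fun k => ?_
  rcases eq_or_ne k i with rfl | hki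
  · simpa using hij
  rcases eq_or_ne k j with rfl | hkj
  · simpa [abs_sub_comm] using hij
  · simp [Equiv.swap_apply_of_ne_of_ne hki hkj]

lemma permMatrix_swap_mulVec_single_sub_single {ι R : Type*} [Fintype ι] [DecidableEq ι]
    [CommRing R] (i j : ι) (c : R) :
    (Equiv.swap i j).permMatrix R *ᵥ (Pi.single i c - Pi.single j c) =
      -(Pi.single i c - Pi.single j c) := by
  rw [permMatrix_mulVec]
  ext k
  rcases eq_or_ne k i with rfl | hki
  · rcases eq_or_ne k j with rfl | hkj
    · simp
    · simp [hkj, hkj.symm]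
  rcases eq_or_ne k j with rfl | hkj
  · simp [hki, hki.symm]
  · simp [Equiv.swap_apply_of_ne_of_ne hki hkj, hki, hkj]

/-- For every `n ≥ 2` and every `λ ∈ [-1,1]` there is an `n × n` tridiagonal doubly
stochastic matrix having `λ` as an eigenvalue. -/
theorem exists_tridiagonal_doublyStochastic_with_eigenvalue (n : ℕ) (hn : 2 ≤ n)
    (μ : ℝ) (hμ : μ ∈ Set.Icc (-1 : ℝ) 1) :
    ∃ A : Matrix (Fin n) (Fin n) ℝ, IsDoublyStochastic A ∧ IsTridiagonal A ∧
      ∃ v : Fin n → ℝ, v ≠ 0 ∧ A.mulVec v = μ • v := by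
  obtain ⟨hμ₁, hμ₂⟩ := hμ
  let i : Fin n := ⟨0, by omega⟩
  let j : Fin n := ⟨1, by omega⟩
  have hij : i ≠ j := by simp [i, j, Fin.ext_iff]
  let P := (Equiv.swap i j).permMatrix ℝ
  refine ⟨((1 + μ) / 2) • 1 + ((1 - μ) / 2) • P, ?_, ?_, Pi.single i 1 - Pi.single j 1, ?_, ?_⟩
  · rw [isDoublyStochastic_iff_mem_doublyStochastic]
    exact convex_doublyStochastic (one_mem _) permMatrix_mem_doublyStochastic
      (by linarith) (by linarith) (by ring)
  · exact (IsTridiagonal.one.smul _).add ((isTridiagonal_permMatrix_swap (by simp [i, j])).smul _)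
  · intro h
    simpa [hij] using congrFun h i
  · rw [add_mulVec, smul_mulVec, smul_mulVec, one_mulVec,
      permMatrix_swap_mulVec_single_sub_single]
    module
end

section
/- Let A be an n×n tridiagonal doubly stochastic matrix with off-diagonal entries b_i = A(i, i+1) for i = 1, …, n-1, and set b_0 = b_n = 0. If b_{i-1} + b_i ≤ 1/2 for all i = 1, …, n, then A is positive semidefinite. -/
/-!
For a doubly stochastic `A`, expanding `∑ i j, A i j * (x i + x j) ^ 2` with unit row and column
sums gives `2 * xᵀ A x + 2 * ‖x‖²`; dropping the off-diagonal terms bounds it below by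
`4 * ∑ i, A i i * x i ^ 2`, so `xᵀ A x ≥ 0` as soon as every `A i i ≥ 1 / 2`. For a
tridiagonal doubly stochastic matrix the sub- and superdiagonal coincide, so
`A i i = 1 - b_{i-1} - b_i`.
-/

open Matrix

section QuadraticForm

variable {ι : Type*} [Fintype ι] [DecidableEq ι] {A : Matrix ι ι ℝ}

lemma sum_mul_add_sq_eq_of_mem_doublyStochastic (hA : A ∈ doublyStochastic ℝ ι)
    (x : ι → ℝ) :
    ∑ i, ∑ j, A i j * (x i + x j) ^ 2 = 2 * (x ⬝ᵥ A *ᵥ x) + 2 * ∑ i, x i ^ 2 := by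
  have hrow : ∑ i, ∑ j, A i j * x i ^ 2 = ∑ i, x i ^ 2 := by
    simp only [← Finset.sum_mul, sum_row_of_mem_doublyStochastic hA, one_mul]
  have hcol : ∑ i, ∑ j, A i j * x j ^ 2 = ∑ j, x j ^ 2 := by
    rw [Finset.sum_comm]
    simp only [← Finset.sum_mul, sum_col_of_mem_doublyStochastic hA, one_mul]
  have hquad : x ⬝ᵥ A *ᵥ x = ∑ i, ∑ j, A i j * (x i * x j) := by
    simp only [dotProduct, mulVec, Finset.mul_sum]
    exact Finset.sum_congr rfl fun i _ => Finset.sum_congr rfl fun j _ => by ring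
  have hexpand : ∑ i, ∑ j, A i j * (x i + x j) ^ 2 =
      2 * ∑ i, ∑ j, A i j * (x i * x j) + ∑ i, ∑ j, A i j * x i ^ 2 +
        ∑ i, ∑ j, A i j * x j ^ 2 := by
    simp only [Finset.mul_sum, ← Finset.sum_add_distrib]
    exact Finset.sum_congr rfl fun i _ => Finset.sum_congr rfl fun j _ => by ring
  rw [hexpand, hrow, hcol, hquad]
  ring

lemma dotProduct_mulVec_nonneg_of_mem_doublyStochastic (hA : A ∈ doublyStochastic ℝ ι)
    (hdiag : ∀ i, 1 / 2 ≤ A i i) (x : ι → ℝ) : 0 ≤ x ⬝ᵥ A *ᵥ x := by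
  have hdiag_le : ∀ i, A i i * (x i + x i) ^ 2 ≤ ∑ j, A i j * (x i + x j) ^ 2 := fun i =>
    Finset.single_le_sum (f := fun j => A i j * (x i + x j) ^ 2)
      (fun j _ => mul_nonneg (nonneg_of_mem_doublyStochastic hA) (sq_nonneg _))
      (Finset.mem_univ i)
  have hsq_le : ∀ i, 2 * x i ^ 2 ≤ A i i * (x i + x i) ^ 2 := fun i => by
    nlinarith [hdiag i, sq_nonneg (x i)]
  have := Finset.sum_le_sum fun i (_ : i ∈ Finset.univ) => (hsq_le i).trans (hdiag_le i)
  rw [sum_mul_add_sq_eq_of_mem_doublyStochastic hA, ← Finset.mul_sum] at this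
  linarith

end QuadraticForm

section Tridiagonal

variable {n : ℕ} {A : Matrix (Fin n) (Fin n) ℝ}

lemma IsTridiagonal.transpose_s3 (hA : IsTridiagonal A) : IsTridiagonal Aᵀ := fun i j h =>
  hA j i (abs_sub_comm (i : ℤ) j ▸ h)

lemma bEnt_eq_of_succ_eq {a b : Fin n} (h : (a : ℕ) + 1 = b) : bEnt A b = A a b := by
  rw [bEnt, dif_pos ⟨by omega, b.isLt⟩]
  congr
  omega

lemma IsTridiagonal.sum_filter_gt (hA : IsTridiagonal A) (i : Fin n) :
    ∑ j with i < j, A i j = bEnt A (i + 1) := by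
  by_cases hi : (i : ℕ) + 1 < n
  · rw [bEnt_eq_of_succ_eq (b := ⟨i + 1, hi⟩) rfl]
    refine Finset.sum_eq_single_of_mem _ ?_ fun j hj hne => hA _ _ ?_
    · simp only [Finset.mem_filter, Finset.mem_univ, true_and, Fin.lt_def]
      omega
    simp only [Finset.mem_filter, Finset.mem_univ, true_and, Fin.lt_def, ne_eq, Fin.ext_iff]
      at hj hne
    rw [le_abs]
    omega
  · rw [bEnt, dif_neg (by omega)]
    refine Finset.sum_eq_zero fun j hj => ?_
    simp only [Finset.mem_filter, Finset.mem_univ, true_and, Fin.lt_def] at hj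
    omega

lemma IsTridiagonal.sum_filter_lt (hA : IsTridiagonal A) (i : Fin n) :
    ∑ j with j < i, A i j = bEnt Aᵀ i := by
  by_cases hi : 1 ≤ (i : ℕ)
  · rw [bEnt_eq_of_succ_eq (a := ⟨i - 1, by omega⟩) (by simp only; omega), transpose_apply]
    refine Finset.sum_eq_single_of_mem _ ?_ fun j hj hne => hA _ _ ?_
    · simp only [Finset.mem_filter, Finset.mem_univ, true_and, Fin.lt_def]
      omega
    simp only [Finset.mem_filter, Finset.mem_univ, true_and, Fin.lt_def, ne_eq, Fin.ext_iff]
      at hj hne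
    rw [le_abs]
    omega
  · rw [bEnt, dif_neg (by omega)]
    refine Finset.sum_eq_zero fun j hj => ?_
    simp only [Finset.mem_filter, Finset.mem_univ, true_and, Fin.lt_def] at hj
    omega

lemma IsTridiagonal.sum_row (hA : IsTridiagonal A) (i : Fin n) :
    ∑ j, A i j = bEnt Aᵀ i + A i i + bEnt A (i + 1) := by
  have hsplit : ∀ j, A i j = (if j < i then A i j else 0) + (if i = j then A i j else 0) +
      (if i < j then A i j else 0) := fun j => by
    rcases lt_trichotomy j i with h | rfl | h
    · simp [h, h.ne', h.not_gt]
    · simp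
    · simp [h, h.ne, h.not_gt]
  rw [Finset.sum_congr rfl fun j _ => hsplit j, Finset.sum_add_distrib, Finset.sum_add_distrib,
    Finset.sum_ite_eq, if_pos (Finset.mem_univ i), ← Finset.sum_filter, ← Finset.sum_filter,
    hA.sum_filter_lt, hA.sum_filter_gt]

-- Row `i` and column `i` give the same sum, so the defect `bEnt A k - bEnt Aᵀ k`
-- is constant in `k`, and it vanishes at `k = 0`.
lemma bEnt_transpose_of_mem_doublyStochastic (hDS : A ∈ doublyStochastic ℝ (Fin n))
    (hA : IsTridiagonal A) (k : ℕ) : bEnt Aᵀ k = bEnt A k := by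
  induction k with
  | zero => simp [bEnt]
  | succ k ih =>
    by_cases hk : k < n
    · have hrow := hA.sum_row ⟨k, hk⟩
      have hcol := hA.transpose_s3.sum_row ⟨k, hk⟩
      rw [sum_row_of_mem_doublyStochastic hDS] at hrow
      rw [sum_row_of_mem_doublyStochastic (transpose_mem_doublyStochastic_iff.mpr hDS),
        transpose_transpose, transpose_apply] at hcol
      simp only at hrow hcol
      linarith
    · simp [bEnt, show ¬ k + 1 < n by omega]

lemma IsTridiagonal.diag_add_bEnt_add_bEnt (hDS : A ∈ doublyStochastic ℝ (Fin n))
    (hA : IsTridiagonal A) (i : Fin n) : A i i + bEnt A i + bEnt A (i + 1) = 1 := by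
  rw [← sum_row_of_mem_doublyStochastic hDS i, hA.sum_row,
    bEnt_transpose_of_mem_doublyStochastic hDS hA]
  ring

end Tridiagonal

/-- A diagonally dominant tridiagonal doubly stochastic matrix
(`b_{i-1} + b_i ≤ 1/2` for all `i = 1, …, n`) is positive semidefinite. -/
theorem tridiagonal_doublyStochastic_diagDom_posSemidef {n : ℕ}
    (A : Matrix (Fin n) (Fin n) ℝ) (hDS : IsDoublyStochastic A) (htri : IsTridiagonal A)
    (hdom : ∀ i : Fin n, bEnt A (i : ℕ) + bEnt A ((i : ℕ) + 1) ≤ 1 / 2) :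
    ∀ x : Fin n → ℝ, 0 ≤ x ⬝ᵥ A.mulVec x := by
  have hA : A ∈ doublyStochastic ℝ (Fin n) := mem_doublyStochastic_iff_sum.mpr hDS
  refine dotProduct_mulVec_nonneg_of_mem_doublyStochastic hA fun i => ?_
  linarith [htri.diag_add_bEnt_add_bEnt hA i, hdom i]
end

section
/- If A is an n×n real symmetric tridiagonal matrix that is positive semidefinite with all entries non-negative (doubly non-negative), then A is completely positive, i.e., A = VVᵀ for some entrywise non-negative n×k real matrix V. -/
open Matrix

/-! Subtracting `w wᵀ`, where `w` is the first column of `A` divided by `√(A 0 0)`, clears the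
first row and column of `A` and leaves a positive semidefinite Schur complement. For tridiagonal
`A` the vector `w` is supported on the first two coordinates, so on the remaining indices the
complement agrees with `A` off the diagonal: it is again tridiagonal, and non-negative because the
diagonal of a positive semidefinite matrix is. By induction it is completely positive, hence so is
`A = w wᵀ + (A - w wᵀ)` with `w ≥ 0`. -/

def IsCompletelyPositive {m : Type*} (A : Matrix m m ℝ) : Prop :=
  ∃ (k : ℕ) (V : Matrix m (Fin k) ℝ), (∀ i j, 0 ≤ V i j) ∧ A = V * Vᵀ

namespace IsCompletelyPositive

variable {m : Type*}

theorem add {A B : Matrix m m ℝ} (hA : IsCompletelyPositive A)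
    (hB : IsCompletelyPositive B) : IsCompletelyPositive (A + B) := by
  obtain ⟨k, V, hV, rfl⟩ := hA
  obtain ⟨l, W, hW, rfl⟩ := hB
  refine ⟨k + l, (fromCols V W).submatrix id finSumFinEquiv.symm, fun i j => ?_, ?_⟩
  · rcases h : finSumFinEquiv.symm j with c | c <;> simp [h, hV, hW]
  · rw [transpose_submatrix, submatrix_mul_equiv, submatrix_id_id, transpose_fromCols,
      fromCols_mul_fromRows]

theorem vecMulVec_self {w : m → ℝ} (hw : 0 ≤ w) :
    IsCompletelyPositive (vecMulVec w w) :=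
  ⟨1, replicateCol (Fin 1) w, fun i _ => hw i, by
    rw [transpose_replicateCol]; exact vecMulVec_eq (Fin 1) w w⟩

theorem of_submatrix_succ {n : ℕ} {C : Matrix (Fin (n + 1)) (Fin (n + 1)) ℝ}
    (hrow : ∀ j, C 0 j = 0) (hcol : ∀ i, C i 0 = 0)
    (hC : IsCompletelyPositive (C.submatrix Fin.succ Fin.succ)) : IsCompletelyPositive C := by
  obtain ⟨k, W, hW, hCW⟩ := hC
  refine ⟨k, of (Fin.cons (0 : Fin k → ℝ) fun p => W p),
    fun i => Fin.cases (fun _ => le_rfl) hW i, ?_⟩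
  ext i j
  refine Fin.cases ?_ (fun p => ?_) i
  · simp [hrow, mul_apply]
  refine Fin.cases ?_ (fun q => ?_) j
  · simp [hcol, mul_apply]
  simpa [mul_apply] using congr_fun₂ hCW p q

end IsCompletelyPositive

/-- One step of Cholesky elimination at the pivot `i` splits off the rank-one matrix `w wᵀ` with
`w = choleskyColumn A i`. When `A i i = 0` this is `w = 0`, since `√0 = 0` and `x / 0 = 0`. -/
noncomputable def choleskyColumn {n : Type*} (A : Matrix n n ℝ) (i : n) : n → ℝ :=
  fun j => A j i / √(A i i)

namespace Matrix.PosSemidef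

variable {n : Type*} [Fintype n] [DecidableEq n]

open scoped ComplexOrder in
theorem apply_eq_zero_of_diag_eq_zero {𝕜 : Type*} [RCLike 𝕜] {A : Matrix n n 𝕜}
    (hA : A.PosSemidef) {i : n} (hi : A i i = 0) (j : n) : A j i = 0 := by
  have h := (hA.dotProduct_mulVec_zero_iff (Pi.single i 1)).1 (by simp [hi])
  simpa using congr_fun h j

theorem sub_vecMulVec_choleskyColumn {A : Matrix n n ℝ} (hA : A.PosSemidef) (i : n) :
    (A - vecMulVec (choleskyColumn A i) (choleskyColumn A i)).PosSemidef := by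
  set w := choleskyColumn A i
  have hsymm : ∀ j, A j i = A i j := fun j => by simpa using hA.isHermitian.apply i j
  have hwH : (vecMulVec w w).IsHermitian := by
    simpa using (posSemidef_vecMulVec_self_star w).isHermitian
  refine .of_dotProduct_mulVec_nonneg (hA.isHermitian.sub hwH) fun x => ?_
  set s := (A *ᵥ x) i
  have hxcol : x ⬝ᵥ A.col i = s := by simp [s, mulVec, dotProduct, hsymm, mul_comm]
  have hw : w ⬝ᵥ x = s / √(A i i) := by
    simp [w, s, choleskyColumn, mulVec, dotProduct, hsymm, div_mul_eq_mul_div, Finset.sum_div]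
  -- `x - (s / A i i) • eᵢ` minimises the quadratic form of `A` along `eᵢ`; if `A i i = 0`
  -- then `s / A i i = 0` and both sides below reduce to the form of `A` at `x`.
  have key := hA.dotProduct_mulVec_nonneg (x - (s / A i i) • Pi.single i 1)
  simp only [star_trivial, mulVec_sub, mulVec_smul, mulVec_single_one, sub_dotProduct,
    dotProduct_sub, smul_dotProduct, dotProduct_smul, single_one_dotProduct, hxcol, smul_eq_mul,
    col_apply] at key
  rw [star_trivial, sub_mulVec, dotProduct_sub, vecMulVec_mulVec, dotProduct_smul, op_smul_eq_smul,
    smul_eq_mul, dotProduct_comm x w, hw, div_mul_div_comm, Real.mul_self_sqrt hA.diag_nonneg]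
  rcases eq_or_ne (A i i) 0 with ha | ha
  · simpa [ha] using key
  · convert key using 1
    field_simp
    ring

theorem sub_vecMulVec_choleskyColumn_apply_self_right {A : Matrix n n ℝ} (hA : A.PosSemidef)
    (i j : n) : (A - vecMulVec (choleskyColumn A i) (choleskyColumn A i)) j i = 0 := by
  rcases eq_or_ne (A i i) 0 with ha | ha
  · simp [vecMulVec_apply, choleskyColumn, ha, hA.apply_eq_zero_of_diag_eq_zero ha]
  · have : 0 < √(A i i) := Real.sqrt_pos.2 (hA.diag_nonneg.lt_of_ne' ha)
    simp only [sub_apply, vecMulVec_apply, choleskyColumn]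
    field_simp
    rw [Real.sq_sqrt hA.diag_nonneg]
    ring

end Matrix.PosSemidef

namespace IsTridiagonal

variable {n : ℕ}

theorem submatrix_succ {A : Matrix (Fin (n + 1)) (Fin (n + 1)) ℝ} (hA : IsTridiagonal A) :
    IsTridiagonal (A.submatrix Fin.succ Fin.succ) := fun p q hpq =>
  hA p.succ q.succ (by simpa using hpq)

theorem apply_zero_of_two_le {A : Matrix (Fin (n + 1)) (Fin (n + 1)) ℝ} (hA : IsTridiagonal A)
    {i : Fin (n + 1)} (hi : 2 ≤ (i : ℕ)) : A i 0 = 0 :=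
  hA _ _ (by rw [Fin.val_zero, Nat.cast_zero, sub_zero, abs_of_nonneg (by positivity)]; omega)

theorem choleskyColumn_succ_mul_succ {A : Matrix (Fin (n + 1)) (Fin (n + 1)) ℝ}
    (hA : IsTridiagonal A) {p q : Fin n} (hpq : p ≠ q) :
    choleskyColumn A 0 p.succ * choleskyColumn A 0 q.succ = 0 := by
  have hpq' : (p : ℕ) ≠ q := Fin.val_ne_of_ne hpq
  rcases Nat.lt_or_gt_of_ne hpq' with h | h
  · simp [choleskyColumn, hA.apply_zero_of_two_le (i := q.succ) (by simp; omega)]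
  · simp [choleskyColumn, hA.apply_zero_of_two_le (i := p.succ) (by simp; omega)]

end IsTridiagonal

theorem isCompletelyPositive_of_isTridiagonal :
    ∀ {n : ℕ} {A : Matrix (Fin n) (Fin n) ℝ}, A.PosSemidef → IsTridiagonal A →
      (∀ i j, 0 ≤ A i j) → IsCompletelyPositive A
  | 0, _, _, _, _ => ⟨0, 0, fun i => i.elim0, Subsingleton.elim _ _⟩
  | n + 1, A, hA, htri, hnonneg => by
    set w := choleskyColumn A 0
    set C := A - vecMulVec w w
    have hC : C.PosSemidef := hA.sub_vecMulVec_choleskyColumn 0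
    have hC_col : ∀ i, C i 0 = 0 := hA.sub_vecMulVec_choleskyColumn_apply_self_right 0
    have hC_row : ∀ j, C 0 j = 0 := fun j => by
      simpa [hC_col] using (hC.isHermitian.apply 0 j).symm
    have hC_offDiag : ∀ p q : Fin n, p ≠ q → C p.succ q.succ = A p.succ q.succ :=
      fun p q hpq => by
        simp only [C, w, Matrix.sub_apply, vecMulVec_apply,
          htri.choleskyColumn_succ_mul_succ hpq, sub_zero]
    have hB_tri : IsTridiagonal (C.submatrix Fin.succ Fin.succ) := fun p q hpq => by
      have hne : p ≠ q := by rintro rfl; simp at hpq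
      rw [submatrix_apply, hC_offDiag p q hne]
      exact htri.submatrix_succ p q hpq
    have hB_nonneg : ∀ p q, 0 ≤ C.submatrix Fin.succ Fin.succ p q := fun p q => by
      rcases eq_or_ne p q with rfl | hne
      · exact (hC.submatrix Fin.succ).diag_nonneg
      · rw [submatrix_apply, hC_offDiag p q hne]
        exact hnonneg _ _
    have hw : 0 ≤ w := fun i => div_nonneg (hnonneg i 0) (Real.sqrt_nonneg _)
    have hCP := IsCompletelyPositive.of_submatrix_succ hC_row hC_col
      (isCompletelyPositive_of_isTridiagonal (hC.submatrix Fin.succ) hB_tri hB_nonneg)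
    simpa [C] using (IsCompletelyPositive.vecMulVec_self hw).add hCP

/-- A symmetric tridiagonal doubly non-negative matrix (positive semidefinite with
non-negative entries) is completely positive: `A = V * Vᵀ` with `V` entrywise non-negative. -/
theorem symm_tridiagonal_doublyNonneg_completelyPositive {n : ℕ}
    (A : Matrix (Fin n) (Fin n) ℝ)
    (hsymm : Aᵀ = A)
    (htri : IsTridiagonal A)
    (hnonneg : ∀ i j, 0 ≤ A i j)
    (hpsd : ∀ x : Fin n → ℝ, 0 ≤ x ⬝ᵥ A.mulVec x) :
    ∃ (k : ℕ) (V : Matrix (Fin n) (Fin k) ℝ), (∀ i j, 0 ≤ V i j) ∧ A = V * Vᵀ := by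
  have hA : A.PosSemidef := .of_dotProduct_mulVec_nonneg (by simpa [IsHermitian] using hsymm)
    (by simpa using hpsd)
  exact isCompletelyPositive_of_isTridiagonal hA htri hnonneg
end

section
/- Let A be an n×n irreducible tridiagonal doubly stochastic matrix with n ≥ 3. If A is diagonally dominant (i.e., b_{i-1} + b_i ≤ 1/2 for all i, where b_i = A(i,i+1), b_0 = b_n = 0), then A is positive definite. -/
open Matrix

/-!
For a doubly stochastic `M` one has
`xᵀ M x = ∑ᵢ (2 Mᵢᵢ - 1) xᵢ² + ½ ∑_{i ≠ j} Mᵢⱼ (xᵢ + xⱼ)²`.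
For a tridiagonal doubly stochastic `A`, the mass crossing each cut `{p < k} | {q ≥ k}` is the
same in both directions and equals `b_k`, whence `Aᵢᵢ = 1 - b_i - b_{i+1}`; diagonal dominance
is then `Aᵢᵢ ≥ 1/2`, so both sums are nonnegative. If the form vanishes at `x`, irreducibility
forces `x_{i+1} = -x_i`, and `A₀₀ = 1 - b₁ > 1/2` (because `b₂ > 0`) forces `x₀ = 0`.
-/

open Finset

namespace Matrix

variable {ι : Type*} [Fintype ι] [DecidableEq ι]

theorem sum_sum_compl_eq_sum_compl_sum {R : Type*} [AddCommGroup R] {M : Matrix ι ι R}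
    (hM : ∀ i, ∑ j, M i j = ∑ j, M j i) (s : Finset ι) :
    ∑ p ∈ s, ∑ q ∈ sᶜ, M p q = ∑ p ∈ sᶜ, ∑ q ∈ s, M p q := by
  have hrow : ∑ p ∈ s, ∑ q, M p q = ∑ p ∈ s, ∑ q, M q p := sum_congr rfl fun p _ => hM p
  simp only [← sum_compl_add_sum s, sum_add_distrib] at hrow
  rw [sum_comm (s := s) (t := sᶜ), sum_comm (s := s) (t := s) (f := fun p q => M q p)] at hrow
  exact add_right_cancel hrow

variable {M : Matrix ι ι ℝ} {x : ι → ℝ}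

theorem sum_sum_mul_sq_add_eq (hM : M ∈ doublyStochastic ℝ ι) :
    ∑ i, ∑ j, M i j * (x i + x j) ^ 2 = 2 * ∑ i, x i ^ 2 + 2 * (x ⬝ᵥ M *ᵥ x) := by
  have hrow : ∑ i, ∑ j, M i j * x i ^ 2 = ∑ i, x i ^ 2 := by
    simp_rw [← sum_mul, sum_row_of_mem_doublyStochastic hM, one_mul]
  have hcol : ∑ i, ∑ j, M i j * x j ^ 2 = ∑ i, x i ^ 2 := by
    rw [sum_comm]; simp_rw [← sum_mul, sum_col_of_mem_doublyStochastic hM, one_mul]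
  have hcross : ∑ i, ∑ j, M i j * (2 * x i * x j) = 2 * (x ⬝ᵥ M *ᵥ x) := by
    simp only [dotProduct, mulVec, mul_sum]
    exact sum_congr rfl fun i _ => sum_congr rfl fun j _ => by ring
  calc ∑ i, ∑ j, M i j * (x i + x j) ^ 2
      = ∑ i, ∑ j, M i j * x i ^ 2 + ∑ i, ∑ j, M i j * x j ^ 2
        + ∑ i, ∑ j, M i j * (2 * x i * x j) := by
        simp only [← sum_add_distrib]
        exact sum_congr rfl fun i _ => sum_congr rfl fun j _ => by ring
    _ = _ := by rw [hrow, hcol, hcross]; ring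

theorem dotProduct_mulVec_self_eq (hM : M ∈ doublyStochastic ℝ ι) :
    x ⬝ᵥ M *ᵥ x = ∑ i, (2 * M i i - 1) * x i ^ 2
      + (∑ p ∈ univ.offDiag, M p.1 p.2 * (x p.1 + x p.2) ^ 2) / 2 := by
  have hsplit := sum_sum_mul_sq_add_eq hM (x := x)
  rw [← sum_product' (f := fun i j => M i j * (x i + x j) ^ 2), ← diag_union_offDiag,
    sum_union (disjoint_diag_offDiag _), sum_diag] at hsplit
  dsimp only at hsplit
  have hdiag : ∑ i, (2 * M i i - 1) * x i ^ 2
      = (∑ i, M i i * (x i + x i) ^ 2) / 2 - ∑ i, x i ^ 2 := by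
    rw [eq_sub_iff_add_eq, ← sum_add_distrib, sum_div]
    exact sum_congr rfl fun i _ => by ring
  rw [hdiag]
  linarith

theorem mul_sq_le_dotProduct_mulVec_self (hM : M ∈ doublyStochastic ℝ ι)
    (hdiag : ∀ i, 1 / 2 ≤ M i i) (k : ι) :
    (2 * M k k - 1) * x k ^ 2 ≤ x ⬝ᵥ M *ᵥ x := by
  have hterm : ∀ i, 0 ≤ (2 * M i i - 1) * x i ^ 2 := fun i =>
    mul_nonneg (by linarith [hdiag i]) (sq_nonneg _)
  have hoff : 0 ≤ ∑ p ∈ univ.offDiag, M p.1 p.2 * (x p.1 + x p.2) ^ 2 :=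
    sum_nonneg fun p _ => mul_nonneg (nonneg_of_mem_doublyStochastic hM) (sq_nonneg _)
  rw [dotProduct_mulVec_self_eq hM]
  linarith [single_le_sum (fun i _ => hterm i) (mem_univ k)]

theorem mul_sq_add_le_dotProduct_mulVec_self (hM : M ∈ doublyStochastic ℝ ι)
    (hdiag : ∀ i, 1 / 2 ≤ M i i) {i j : ι} (hij : i ≠ j) :
    M i j * (x i + x j) ^ 2 / 2 ≤ x ⬝ᵥ M *ᵥ x := by
  have hdiag_sum : 0 ≤ ∑ i, (2 * M i i - 1) * x i ^ 2 := sum_nonneg fun i _ =>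
    mul_nonneg (by linarith [hdiag i]) (sq_nonneg _)
  have hoff := single_le_sum (f := fun p : ι × ι => M p.1 p.2 * (x p.1 + x p.2) ^ 2)
    (fun p _ => mul_nonneg (nonneg_of_mem_doublyStochastic hM) (sq_nonneg _))
    (mem_offDiag.2 ⟨mem_univ i, mem_univ j, hij⟩ : (i, j) ∈ univ.offDiag)
  rw [dotProduct_mulVec_self_eq hM]
  linarith

theorem eq_zero_of_dotProduct_mulVec_self_nonpos (hM : M ∈ doublyStochastic ℝ ι)
    (hdiag : ∀ i, 1 / 2 ≤ M i i) (hx : x ⬝ᵥ M *ᵥ x ≤ 0) {k : ι} (hk : 1 / 2 < M k k) :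
    x k = 0 := by
  have hle := mul_sq_le_dotProduct_mulVec_self hM hdiag (x := x) k
  exact (sq_nonpos_iff _).1 (by nlinarith)

theorem eq_neg_of_dotProduct_mulVec_self_nonpos (hM : M ∈ doublyStochastic ℝ ι)
    (hdiag : ∀ i, 1 / 2 ≤ M i i) (hx : x ⬝ᵥ M *ᵥ x ≤ 0) {i j : ι} (hij : i ≠ j)
    (hpos : 0 < M i j) : x j = -x i := by
  have hle := mul_sq_add_le_dotProduct_mulVec_self hM hdiag (x := x) hij
  linarith [(sq_nonpos_iff (x i + x j)).1 (by nlinarith)]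

end Matrix

theorem bEnt_zero {n : ℕ} (A : Matrix (Fin n) (Fin n) ℝ) : bEnt A 0 = 0 :=
  dif_neg (by omega)

theorem bEnt_val_succ {m : ℕ} (A : Matrix (Fin (m + 1)) (Fin (m + 1)) ℝ) (i : Fin m) :
    bEnt A (i + 1) = A i.castSucc i.succ :=
  dif_pos (by omega)

namespace IsTridiagonal

variable {n : ℕ} {A : Matrix (Fin n) (Fin n) ℝ}

theorem apply_eq_zero (htri : IsTridiagonal A) {p q : Fin n}
    (h : p.val + 2 ≤ q.val ∨ q.val + 2 ≤ p.val) : A p q = 0 :=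
  htri p q (by rw [le_abs]; omega)

theorem sum_sum_cut_eq_bEnt (htri : IsTridiagonal A) (k : ℕ) :
    ∑ p : Fin n with p.val < k, ∑ q : Fin n with k ≤ q.val, A p q = bEnt A k := by
  unfold bEnt
  split_ifs with hk
  · rw [← sum_product' (f := fun p q => A p q),
      sum_eq_single_of_mem ((⟨k - 1, by omega⟩, ⟨k, hk.2⟩) : Fin n × Fin n)]
    · simp only [mem_product, mem_filter, mem_univ, true_and]
      omega
    · rintro ⟨p, q⟩ hpq hne
      simp only [mem_product, mem_filter, mem_univ, true_and] at hpq
      simp only [ne_eq, Prod.mk.injEq, Fin.ext_iff] at hne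
      exact htri.apply_eq_zero (p := p) (q := q) (by omega)
  · refine sum_eq_zero fun p hp => sum_eq_zero fun q hq => ?_
    simp only [mem_filter, mem_univ, true_and] at hp hq
    omega

theorem sum_row_gt_eq_bEnt (htri : IsTridiagonal A) (i : Fin n) :
    ∑ q : Fin n with i.val < q.val, A i q = bEnt A (i + 1) := by
  refine Eq.trans ?_ (htri.sum_sum_cut_eq_bEnt (i + 1))
  rw [eq_comm, sum_eq_single_of_mem i (by simp)]
  · simp only [Nat.add_one_le_iff]
  · intro p hp hpi
    refine sum_eq_zero fun q hq => htri.apply_eq_zero (Or.inl ?_)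
    simp only [mem_filter, mem_univ, true_and] at hp hq
    have : p.val ≠ i.val := Fin.val_ne_of_ne hpi
    omega

theorem sum_row_lt_eq_bEnt (hDS : IsDoublyStochastic A) (htri : IsTridiagonal A) (i : Fin n) :
    ∑ q : Fin n with q.val < i.val, A i q = bEnt A i := by
  have hbal : ∀ p, ∑ q, A p q = ∑ q, A q p := fun p => (hDS.2.1 p).trans (hDS.2.2 p).symm
  have hcompl : univ.filter (fun q : Fin n => i.val ≤ q.val)
      = (univ.filter fun q : Fin n => q.val < i.val)ᶜ := by
    ext; simp
  refine Eq.trans ?_ (htri.sum_sum_cut_eq_bEnt i)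
  rw [hcompl, sum_sum_compl_eq_sum_compl_sum hbal, ← hcompl, eq_comm,
    sum_eq_single_of_mem i (by simp)]
  intro p hp hpi
  refine sum_eq_zero fun q hq => htri.apply_eq_zero (Or.inr ?_)
  simp only [mem_filter, mem_univ, true_and] at hp hq
  have : p.val ≠ i.val := Fin.val_ne_of_ne hpi
  omega

theorem diag_eq (hDS : IsDoublyStochastic A) (htri : IsTridiagonal A) (i : Fin n) :
    A i i = 1 - bEnt A i - bEnt A (i + 1) := by
  have hsplit : ∑ q, A i q = ∑ q : Fin n with q.val < i.val, A i q + A i i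
      + ∑ q : Fin n with i.val < q.val, A i q := by
    rw [← sum_filter_add_sum_filter_not univ (fun q : Fin n => q.val < i.val), add_assoc]
    have hge : univ.filter (fun q : Fin n => ¬ q.val < i.val)
        = insert i (univ.filter fun q : Fin n => i.val < q.val) := by
      ext q; simp only [mem_filter, mem_univ, true_and, mem_insert, Fin.ext_iff]; omega
    rw [hge, sum_insert (by simp)]
  rw [hDS.2.1 i, htri.sum_row_gt_eq_bEnt, sum_row_lt_eq_bEnt hDS htri] at hsplit
  linarith

end IsTridiagonal

/-- An irreducible tridiagonal doubly stochastic matrix with `n ≥ 3` that is diagonally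
dominant (`b_{i-1} + b_i ≤ 1/2` for all `i`) is positive definite. -/
theorem irreducible_tridiagonal_doublyStochastic_diagDom_posDef {n : ℕ} (hn : 3 ≤ n)
    (A : Matrix (Fin n) (Fin n) ℝ) (hDS : IsDoublyStochastic A) (htri : IsTridiagonal A)
    (hirr : ∀ k : ℕ, 1 ≤ k → k < n → 0 < bEnt A k)
    (hdom : ∀ i : Fin n, bEnt A (i : ℕ) + bEnt A ((i : ℕ) + 1) ≤ 1 / 2) :
    ∀ x : Fin n → ℝ, x ≠ 0 → 0 < x ⬝ᵥ A.mulVec x := by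
  intro x hx
  obtain ⟨m, rfl⟩ : ∃ m, n = m + 1 := ⟨n - 1, by omega⟩
  have hM : A ∈ doublyStochastic ℝ (Fin (m + 1)) := mem_doublyStochastic_iff_sum.2 hDS
  have hdiag : ∀ i, 1 / 2 ≤ A i i := fun i => by
    linarith [htri.diag_eq hDS i, hdom i]
  have hcorner : 1 / 2 < A 0 0 := by
    have h00 : A 0 0 = 1 - bEnt A 1 := by simpa [bEnt_zero] using htri.diag_eq hDS 0
    have h12 : bEnt A 1 + bEnt A 2 ≤ 1 / 2 := hdom ⟨1, by omega⟩
    linarith [hirr 2 le_add_self (by omega)]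
  refine lt_of_not_ge fun hQ => hx (funext fun i => ?_)
  induction i using Fin.induction with
  | zero => exact eq_zero_of_dotProduct_mulVec_self_nonpos hM hdiag hQ hcorner
  | succ i ih =>
    have hpos : 0 < A i.castSucc i.succ :=
      bEnt_val_succ A i ▸ hirr (i + 1) (by omega) (by omega)
    rw [Pi.zero_apply, eq_neg_of_dotProduct_mulVec_self_nonpos hM hdiag hQ
      i.castSucc_lt_succ.ne hpos, ih, Pi.zero_apply, neg_zero]
end

section
/- For every n ≥ 3 and every λ ∈ [-1, 1], there exists an n×n symmetric pentadiagonal doubly stochastic matrix having λ as an eigenvalue. -/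
open Matrix

/-- A matrix is pentadiagonal if `A i j = 0` whenever `|i - j| ≥ 3`. -/
def IsPentadiagonal {n : ℕ} (A : Matrix (Fin n) (Fin n) ℝ) : Prop :=
  ∀ i j : Fin n, 3 ≤ |(i : ℤ) - (j : ℤ)| → A i j = 0

/-- Second superdiagonal entries `c_k = A (k, k+2)` in the 1-based indexing of the paper,
with the convention that out-of-range indices give `0`. -/
def cEnt {n : ℕ} (A : Matrix (Fin n) (Fin n) ℝ) (k : ℕ) : ℝ :=
  if h : 1 ≤ k ∧ k + 1 < n then A ⟨k - 1, by omega⟩ ⟨k + 1, h.2⟩ else 0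

/-!
With `P` the permutation matrix of the transposition of the first two indices, the matrix
`t • 1 + (1 - t) • P` with `t ∈ [0, 1]` is a convex combination of doubly stochastic matrices,
symmetric because the transposition is an involution, and even tridiagonal. The vector
`e₀ - e₁` is negated by `P`, so it is an eigenvector for `t - (1 - t) = 2t - 1`, which sweeps
out `[-1, 1]`.
-/

open Equiv

section PermMatrix

variable {ι R : Type*} [DecidableEq ι] [CommRing R]

theorem smul_one_add_smul_permMatrix_mem_doublyStochastic [Fintype ι] [PartialOrder R]
    [IsOrderedRing R] (σ : Perm ι) {t : R} (ht₀ : 0 ≤ t) (ht₁ : t ≤ 1) :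
    t • (1 : Matrix ι ι R) + (1 - t) • σ.permMatrix R ∈ doublyStochastic R ι :=
  convex_doublyStochastic (one_mem _) permMatrix_mem_doublyStochastic ht₀ (sub_nonneg.mpr ht₁)
    (add_sub_cancel t 1)

theorem transpose_smul_one_add_smul_permMatrix_of_inv_eq {σ : Perm ι} (hσ : σ⁻¹ = σ) (s t : R) :
    (s • (1 : Matrix ι ι R) + t • σ.permMatrix R)ᵀ = s • 1 + t • σ.permMatrix R := by
  rw [transpose_add, transpose_smul, transpose_smul, transpose_one, transpose_permMatrix, hσ]

theorem smul_one_add_smul_permMatrix_mulVec_of_comp_eq_neg [Fintype ι] {σ : Perm ι} {v : ι → R}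
    (hv : v ∘ σ = -v) (t : R) :
    (t • (1 : Matrix ι ι R) + (1 - t) • σ.permMatrix R) *ᵥ v = (2 * t - 1) • v := by
  rw [add_mulVec, smul_mulVec, smul_mulVec, one_mulVec, permMatrix_mulVec, hv, smul_neg,
    ← sub_eq_add_neg, ← sub_smul]
  ring_nf

end PermMatrix

theorem comp_swap_eq_neg_single_sub_single {α R : Type*} [DecidableEq α] [Ring R] (i j : α) :
    (Pi.single i 1 - Pi.single j 1 : α → R) ∘ swap i j = -(Pi.single i 1 - Pi.single j 1) := by
  ext k
  simp only [Function.comp_apply, Pi.sub_apply, Pi.neg_apply, Pi.single_apply, swap_apply_def]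
  split_ifs <;> simp_all

theorem abs_sub_swap_apply_le {n : ℕ} (i j k : Fin n) :
    |(k : ℤ) - swap i j k| ≤ |(i : ℤ) - j| := by
  rw [swap_apply_def]
  split_ifs with hi hj
  · subst hi; rfl
  · subst hj; rw [abs_sub_comm]
  · simp

theorem isPentadiagonal_smul_one_add_smul_permMatrix {n : ℕ} {σ : Perm (Fin n)}
    (hσ : ∀ k : Fin n, |(k : ℤ) - σ k| < 3) (s t : ℝ) :
    IsPentadiagonal (s • (1 : Matrix (Fin n) (Fin n) ℝ) + t • σ.permMatrix ℝ) := by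
  intro i j hij
  have hne : i ≠ j := by rintro rfl; simp at hij
  have hσ : σ i ≠ j := by rintro rfl; linarith [hσ i]
  simp [PEquiv.toMatrix_apply, one_apply_ne hne, hσ]

/-- For every `n ≥ 3` and every `λ ∈ [-1,1]` there is an `n × n` symmetric pentadiagonal
doubly stochastic matrix having `λ` as an eigenvalue. -/
theorem exists_pentadiagonal_doublyStochastic_with_eigenvalue (n : ℕ) (hn : 3 ≤ n)
    (μ : ℝ) (hμ : μ ∈ Set.Icc (-1 : ℝ) 1) :
    ∃ A : Matrix (Fin n) (Fin n) ℝ, Aᵀ = A ∧ IsDoublyStochastic A ∧ IsPentadiagonal A ∧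
      ∃ v : Fin n → ℝ, v ≠ 0 ∧ A.mulVec v = μ • v := by
  obtain ⟨t, rfl⟩ : ∃ t, μ = 2 * t - 1 := ⟨(1 + μ) / 2, by ring⟩
  obtain ⟨hμ₀, hμ₁⟩ := hμ
  let i : Fin n := ⟨0, by omega⟩
  let j : Fin n := ⟨1, by omega⟩
  have hij : i ≠ j := by simp [i, j, Fin.ext_iff]
  refine ⟨t • 1 + (1 - t) • (swap i j).permMatrix ℝ,
    transpose_smul_one_add_smul_permMatrix_of_inv_eq (swap_inv i j) _ _,
    mem_doublyStochastic_iff_sum.mp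
      (smul_one_add_smul_permMatrix_mem_doublyStochastic _ (by linarith) (by linarith)),
    isPentadiagonal_smul_one_add_smul_permMatrix
      (fun k : Fin n => (abs_sub_swap_apply_le i j k).trans_lt (by simp [i, j])) _ _,
    Pi.single i 1 - Pi.single j 1, ?_, ?_⟩
  · intro h
    simpa [hij] using congrFun h i
  · exact smul_one_add_smul_permMatrix_mulVec_of_comp_eq_neg
      (comp_swap_eq_neg_single_sub_single i j) t
end

section
/- With A, Ã, Â as in the splitting Ã(i,i) = 1/2 - b_i - b_{i-1}, Ã(i,i+2) = c_i and Â(i,i) = 1/2 - c_i - c_{i-2}, Â(i,i+1) = b_i: if A is diagonally dominant (a_i ≥ b_{i-1} + b_i + c_{i-2} + c_i for all i), then both Ã and Â are diagonally dominant with non-negative diagonal entries, and hence both are positive semidefinite. -/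
open Matrix

/-- The matrix `Ã` of the splitting: `Ã(i,i) = 1/2 - b_i - b_{i-1}`,
`Ã(i,i+2) = Ã(i+2,i) = c_i`, all other entries `0` (1-based indexing). -/
noncomputable def Atil {n : ℕ} (A : Matrix (Fin n) (Fin n) ℝ) : Matrix (Fin n) (Fin n) ℝ :=
  Matrix.of fun i j =>
    if (i : ℕ) = (j : ℕ) then 1 / 2 - bEnt A ((i : ℕ) + 1) - bEnt A (i : ℕ)
    else if (i : ℕ) + 2 = (j : ℕ) then cEnt A ((i : ℕ) + 1)
    else if (j : ℕ) + 2 = (i : ℕ) then cEnt A ((j : ℕ) + 1)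
    else 0

/-- The matrix `Â` of the splitting: `Â(i,i) = 1/2 - c_i - c_{i-2}`,
`Â(i,i+1) = Â(i+1,i) = b_i`, all other entries `0` (1-based indexing). -/
noncomputable def Ahat {n : ℕ} (A : Matrix (Fin n) (Fin n) ℝ) : Matrix (Fin n) (Fin n) ℝ :=
  Matrix.of fun i j =>
    if (i : ℕ) = (j : ℕ) then 1 / 2 - cEnt A ((i : ℕ) + 1) - cEnt A ((i : ℕ) - 1)
    else if (i : ℕ) + 1 = (j : ℕ) then bEnt A ((i : ℕ) + 1)
    else if (j : ℕ) + 1 = (i : ℕ) then bEnt A ((j : ℕ) + 1)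
    else 0

/-!
`Ã` and `Â` are symmetric band matrices with a single pair of off-diagonals (at distance 2 and 1),
so the off-diagonal row sums are `c_i + c_{i-2}` and `b_i + b_{i-1}`, and diagonal dominance of
either reduces to `b_{i-1} + b_i + c_{i-2} + c_i ≤ 1/2`. By symmetry all of these entries lie in
row `i` of `A`, so `a_i + (b_{i-1} + b_i + c_{i-2} + c_i) ≤ 1`, and the hypothesis
`a_i ≥ b_{i-1} + b_i + c_{i-2} + c_i` gives the bound. Gershgorin's circle theorem turns diagonal
dominance into positive semidefiniteness.
-/

namespace Matrix

variable {ι : Type*} [Fintype ι] [DecidableEq ι]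

def IsDiagDominant (M : Matrix ι ι ℝ) : Prop :=
  ∀ i, ∑ j ∈ Finset.univ.erase i, |M i j| ≤ M i i

theorem IsDiagDominant.diag_nonneg {M : Matrix ι ι ℝ} (hM : M.IsDiagDominant) (i : ι) :
    0 ≤ M i i :=
  (Finset.sum_nonneg fun j _ => abs_nonneg (M i j)).trans (hM i)

/-- By Gershgorin's circle theorem every eigenvalue lies in a disc `|μ - M k k| ≤ M k k`. -/
theorem IsDiagDominant.posSemidef {M : Matrix ι ι ℝ} (hdom : M.IsDiagDominant)
    (hM : M.IsSymm) : M.PosSemidef := by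
  have hMh : M.IsHermitian := isHermitian_iff_isSymm.2 hM
  refine hMh.posSemidef_iff_eigenvalues_nonneg.2 fun i => ?_
  have hμ : Module.End.HasEigenvalue (toLin' M) (hMh.eigenvalues i) := by
    rw [Module.End.hasEigenvalue_iff_mem_spectrum, spectrum_toLin']
    exact hMh.eigenvalues_mem_spectrum_real i
  obtain ⟨k, hk⟩ := eigenvalue_mem_ball hμ
  rw [Metric.mem_closedBall, Real.dist_eq] at hk
  simp only [Real.norm_eq_abs] at hk
  show (0 : ℝ) ≤ _
  linarith [neg_abs_le (hMh.eigenvalues i - M k k), hdom k]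

theorem IsDiagDominant.dotProduct_mulVec_nonneg {M : Matrix ι ι ℝ} (hdom : M.IsDiagDominant)
    (hM : M.IsSymm) (x : ι → ℝ) : 0 ≤ x ⬝ᵥ M *ᵥ x := by
  simpa using (hdom.posSemidef hM).dotProduct_mulVec_nonneg x

end Matrix

theorem Finset.sum_ite_le_of_subsingleton {ι : Type*} [Fintype ι] {P : ι → Prop}
    [DecidablePred P] (hP : ∀ a b, P a → P b → a = b) {c : ℝ} (hc : 0 ≤ c) :
    ∑ j, (if P j then c else 0) ≤ c := by
  have hcard : (Finset.univ.filter P).card ≤ 1 := Finset.card_le_one.2 fun a ha b hb =>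
    hP a b (Finset.mem_filter.1 ha).2 (Finset.mem_filter.1 hb).2
  rw [Finset.sum_ite, Finset.sum_const_zero, add_zero, Finset.sum_const, nsmul_eq_mul]
  exact mul_le_of_le_one_left hc (by exact_mod_cast hcard)

theorem Finset.le_sum_ite_of_eq_zero_or {ι : Type*} [Fintype ι] {f : ι → ℝ} (hf : ∀ j, 0 ≤ f j)
    {P : ι → Prop} [DecidablePred P] {t : ℝ} (ht : t = 0 ∨ ∃ j, P j ∧ t = f j) :
    t ≤ ∑ j, if P j then f j else 0 := by
  have hnonneg : ∀ j, 0 ≤ if P j then f j else 0 := fun j => by split_ifs <;> simp [hf]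
  rcases ht with rfl | ⟨j, hj, rfl⟩
  · exact Finset.sum_nonneg fun j _ => hnonneg j
  · simpa [hj] using Finset.single_le_sum (fun j _ => hnonneg j) (Finset.mem_univ j)

/-- Like `bEnt` and `cEnt`, `e` is indexed from `1`: the entry at `(i, i + d)` is `e (i + 1)`. -/
def symmBand (n d : ℕ) (D e : ℕ → ℝ) : Matrix (Fin n) (Fin n) ℝ :=
  of fun i j =>
    if (i : ℕ) = j then D i
    else if (i : ℕ) + d = j then e (i + 1)
    else if (j : ℕ) + d = i then e (j + 1)
    else 0

section symmBand

variable {n d : ℕ} {D e : ℕ → ℝ}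

theorem symmBand_apply_self (i : Fin n) : symmBand n d D e i i = D i := by
  simp [symmBand]

theorem isSymm_symmBand : (symmBand n d D e).IsSymm := by
  ext i j
  simp only [transpose_apply, symmBand, of_apply]
  split_ifs <;> first | rfl | omega | congr 1

theorem sum_erase_abs_symmBand_le (he : ∀ k, 0 ≤ e k) (i : Fin n) :
    ∑ j ∈ Finset.univ.erase i, |symmBand n d D e i j| ≤ e (i + 1) + e (i + 1 - d) := by
  set R : Fin n → ℝ := fun j =>
    (if (j : ℕ) = i + d then e (i + 1) else 0) + (if (j : ℕ) + d = i then e (i + 1 - d) else 0)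
  have hR : ∀ j, 0 ≤ R j := fun j => by
    simp only [R]; split_ifs <;> linarith [he (i + 1), he (i + 1 - d)]
  have hle : ∀ j ∈ Finset.univ.erase i, |symmBand n d D e i j| ≤ R j := by
    intro j hj
    have hji : (j : ℕ) ≠ i := Fin.val_ne_of_ne (Finset.ne_of_mem_erase hj)
    simp only [symmBand, of_apply, R]
    split_ifs <;> first
      | omega
      | simp [abs_of_nonneg (he _), show (j : ℕ) + 1 = i + 1 - d by omega]
      | simp [abs_of_nonneg (he _)]
  calc ∑ j ∈ Finset.univ.erase i, |symmBand n d D e i j|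
      ≤ ∑ j, R j := (Finset.sum_le_sum hle).trans
        (Finset.sum_le_sum_of_subset_of_nonneg (Finset.subset_univ _) fun j _ _ => hR j)
    _ ≤ e (i + 1) + e (i + 1 - d) := by
      rw [Finset.sum_add_distrib]
      gcongr
      · exact Finset.sum_ite_le_of_subsingleton (fun a b ha hb => by omega) (he _)
      · exact Finset.sum_ite_le_of_subsingleton (fun a b ha hb => by omega) (he _)

theorem symmBand_isDiagDominant (he : ∀ k, 0 ≤ e k)
    (hD : ∀ i : Fin n, e (i + 1) + e (i + 1 - d) ≤ D i) : (symmBand n d D e).IsDiagDominant :=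
  fun i => by
    rw [symmBand_apply_self]
    exact (sum_erase_abs_symmBand_le he i).trans (hD i)

end symmBand

section bandEntries

variable {n : ℕ} {A : Matrix (Fin n) (Fin n) ℝ}

theorem bEnt_nonneg (hA : ∀ i j, 0 ≤ A i j) (k : ℕ) : 0 ≤ bEnt A k := by
  unfold bEnt; split_ifs
  exacts [hA _ _, le_rfl]

theorem cEnt_nonneg (hA : ∀ i j, 0 ≤ A i j) (k : ℕ) : 0 ≤ cEnt A k := by
  unfold cEnt; split_ifs
  exacts [hA _ _, le_rfl]

theorem add_bEnt_cEnt_le_sum_row (hsymm : Aᵀ = A) (hA : ∀ i j, 0 ≤ A i j) (p : Fin n) :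
    A p p + (bEnt A p + bEnt A (p + 1) + cEnt A (p - 1) + cEnt A (p + 1)) ≤ ∑ j, A p j := by
  have hsymm' : ∀ i j, A j i = A i j := fun i j => congrFun (congrFun hsymm i) j
  -- each term on the left is the entry of row `p` at offset `0, -1, 1, -2` or `2`,
  -- or `0` if that column does not exist
  have h₀ : A p p ≤ ∑ j : Fin n, if (j : ℕ) = p then A p j else 0 :=
    Finset.le_sum_ite_of_eq_zero_or (hA p) (.inr ⟨p, rfl, rfl⟩)
  have h₁ : bEnt A p ≤ ∑ j : Fin n, if (j : ℕ) + 1 = p then A p j else 0 := by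
    refine Finset.le_sum_ite_of_eq_zero_or (hA p) ?_
    unfold bEnt; split_ifs with h
    exacts [.inr ⟨⟨p - 1, by omega⟩, by simp only; omega, hsymm' _ _⟩, .inl rfl]
  have h₂ : bEnt A (p + 1) ≤ ∑ j : Fin n, if (j : ℕ) = p + 1 then A p j else 0 := by
    refine Finset.le_sum_ite_of_eq_zero_or (hA p) ?_
    unfold bEnt; split_ifs with h
    exacts [.inr ⟨⟨p + 1, h.2⟩, rfl, rfl⟩, .inl rfl]
  have h₃ : cEnt A (p - 1) ≤ ∑ j : Fin n, if (j : ℕ) + 2 = p then A p j else 0 := by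
    refine Finset.le_sum_ite_of_eq_zero_or (hA p) ?_
    unfold cEnt; split_ifs with h
    · refine .inr ⟨⟨p - 2, by omega⟩, by simp only; omega, ?_⟩
      rw [hsymm']
      congr 1
      simp only [Fin.ext_iff]
      omega
    · exact .inl rfl
  have h₄ : cEnt A (p + 1) ≤ ∑ j : Fin n, if (j : ℕ) = p + 2 then A p j else 0 := by
    refine Finset.le_sum_ite_of_eq_zero_or (hA p) ?_
    unfold cEnt; split_ifs with h
    exacts [.inr ⟨⟨p + 2, h.2⟩, rfl, rfl⟩, .inl rfl]
  have hwindow (j : Fin n) :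
      (if (j : ℕ) = p then A p j else 0) + (if (j : ℕ) + 1 = p then A p j else 0)
        + (if (j : ℕ) = p + 1 then A p j else 0) + (if (j : ℕ) + 2 = p then A p j else 0)
        + (if (j : ℕ) = p + 2 then A p j else 0) ≤ A p j := by
    split_ifs <;> first | omega | linarith [hA p j]
  have hsum := Finset.sum_le_sum fun j (_ : j ∈ Finset.univ) => hwindow j
  simp only [Finset.sum_add_distrib] at hsum
  linarith

end bandEntries

theorem Atil_eq_symmBand {n : ℕ} (A : Matrix (Fin n) (Fin n) ℝ) :
    Atil A = symmBand n 2 (fun k => 1 / 2 - bEnt A (k + 1) - bEnt A k) (cEnt A) :=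
  rfl

theorem Ahat_eq_symmBand {n : ℕ} (A : Matrix (Fin n) (Fin n) ℝ) :
    Ahat A = symmBand n 1 (fun k => 1 / 2 - cEnt A (k + 1) - cEnt A (k - 1)) (bEnt A) :=
  rfl

theorem Atil_Ahat_diagDom_posSemidef_general {n : ℕ} (A : Matrix (Fin n) (Fin n) ℝ)
    (hsymm : Aᵀ = A) (hDS : IsDoublyStochastic A)
    (hdom : ∀ p : Fin n,
      bEnt A (p : ℕ) + bEnt A ((p : ℕ) + 1) + cEnt A ((p : ℕ) - 1) + cEnt A ((p : ℕ) + 1)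
        ≤ A p p) :
    ((∀ i : Fin n, 0 ≤ Atil A i i) ∧
      (∀ i : Fin n, ∑ j ∈ Finset.univ.erase i, |Atil A i j| ≤ Atil A i i) ∧
      ∀ x : Fin n → ℝ, 0 ≤ x ⬝ᵥ (Atil A).mulVec x) ∧
    ((∀ i : Fin n, 0 ≤ Ahat A i i) ∧
      (∀ i : Fin n, ∑ j ∈ Finset.univ.erase i, |Ahat A i j| ≤ Ahat A i i) ∧
      ∀ x : Fin n → ℝ, 0 ≤ x ⬝ᵥ (Ahat A).mulVec x) := by
  obtain ⟨hA, hrow, -⟩ := hDS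
  have hhalf (p : Fin n) :
      bEnt A p + bEnt A (p + 1) + cEnt A (p - 1) + cEnt A (p + 1) ≤ 1 / 2 := by
    linarith [add_bEnt_cEnt_le_sum_row hsymm hA p, hrow p, hdom p]
  have hprops (M : Matrix (Fin n) (Fin n) ℝ) (hdom : M.IsDiagDominant) (hM : M.IsSymm) :
      (∀ i, 0 ≤ M i i) ∧ M.IsDiagDominant ∧ ∀ x, 0 ≤ x ⬝ᵥ M *ᵥ x :=
    ⟨hdom.diag_nonneg, hdom, hdom.dotProduct_mulVec_nonneg hM⟩
  rw [Atil_eq_symmBand, Ahat_eq_symmBand]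
  refine ⟨hprops _ (symmBand_isDiagDominant (cEnt_nonneg hA) fun i => ?_) isSymm_symmBand,
    hprops _ (symmBand_isDiagDominant (bEnt_nonneg hA) fun i => ?_) isSymm_symmBand⟩
  · rw [show (i : ℕ) + 1 - 2 = i - 1 by omega]
    linarith [hhalf i]
  · rw [Nat.add_sub_cancel]
    linarith [hhalf i]

/-- If the symmetric pentadiagonal doubly stochastic matrix `A` is diagonally dominant
(`a_i ≥ b_{i-1} + b_i + c_{i-2} + c_i` for all `i`), then both `Ã` and `Â` are diagonally
dominant with non-negative diagonal entries, and hence both are positive semidefinite. -/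
theorem Atil_Ahat_diagDom_posSemidef {n : ℕ} (A : Matrix (Fin n) (Fin n) ℝ)
    (hsymm : Aᵀ = A) (hDS : IsDoublyStochastic A) (hpenta : IsPentadiagonal A)
    (hdom : ∀ p : Fin n,
      bEnt A (p : ℕ) + bEnt A ((p : ℕ) + 1) + cEnt A ((p : ℕ) - 1) + cEnt A ((p : ℕ) + 1)
        ≤ A p p) :
    ((∀ i : Fin n, 0 ≤ Atil A i i) ∧
      (∀ i : Fin n, ∑ j ∈ Finset.univ.erase i, |Atil A i j| ≤ Atil A i i) ∧
      ∀ x : Fin n → ℝ, 0 ≤ x ⬝ᵥ (Atil A).mulVec x) ∧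
    ((∀ i : Fin n, 0 ≤ Ahat A i i) ∧
      (∀ i : Fin n, ∑ j ∈ Finset.univ.erase i, |Ahat A i j| ≤ Ahat A i i) ∧
      ∀ x : Fin n → ℝ, 0 ≤ x ⬝ᵥ (Ahat A).mulVec x) :=
  Atil_Ahat_diagDom_posSemidef_general A hsymm hDS hdom
end
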